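/- arXiv:1603.05332 — 7 statements merged into one kernel-verified Lean document; each statement's English description precedes it below -/
import Mathlib

section
/- Let X, V, W, Y be real Banach spaces, let L : X → W and C : V → Y be continuous linear maps, and let Â : V → W be Fréchet differentiable at points u, ũ ∈ V. Define 𝐅 : X × V → W × Y by 𝐅(x,v) = (Â(v) + L x, C v), so that for any x ∈ X the Fréchet derivative of 𝐅 at (x,u) is the continuous linear map (h,w) ↦ (L h + Â'(u) w, C w). Suppose there is a continuous linear map M : Y → W with M ∘ C = Â'(ũ) − Â'(u) (i.e., the difference of derivatives factors through the observation operator C). Then, with R : W × Y → W × Y the continuous linear map R(w,y) = (w + M y, y), one has 𝐅'(x̃, ũ) = R ∘ 𝐅'(x, u) for all x, x̃ ∈ X; moreover, equipping W × Y with the supremum norm, ‖R − Id‖ = ‖M‖. -/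
/-!
Since `Â` enters the model affinely, the derivative of `𝐅` at `(x, v)` is
`(h, w) ↦ (L h + Â'(v) w, C w)`, independently of `x`. Writing `Â'(ũ) = Â'(u) + M C`, the extra
term `M C w` is `M` applied to the second component of `𝐅'(x, u)(h, w)`, which is exactly what the
shear `R(w, y) = (w + M y, y)` adds. Finally `R - Id = (y ↦ (M y, 0)) ∘ snd`, whose norm is `‖M‖`
because `snd` has the isometric section `inr`.
-/

open ContinuousLinearMap

section OpNorm

variable {𝕜 : Type*} [NontriviallyNormedField 𝕜]
  {E F G : Type*} [SeminormedAddCommGroup E] [NormedSpace 𝕜 E]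
  [SeminormedAddCommGroup F] [NormedSpace 𝕜 F] [SeminormedAddCommGroup G] [NormedSpace 𝕜 G]

theorem ContinuousLinearMap.opNorm_comp_snd (T : F →L[𝕜] G) :
    ‖T.comp (snd 𝕜 E F)‖ = ‖T‖ := by
  refine le_antisymm ((opNorm_comp_le _ _).trans (mul_le_of_le_one_right (norm_nonneg T)
    (norm_snd_le 𝕜 E F))) ?_
  calc ‖T‖ = ‖(T.comp (snd 𝕜 E F)).comp (inr 𝕜 E F)‖ := rfl
    _ ≤ ‖T.comp (snd 𝕜 E F)‖ * ‖inr 𝕜 E F‖ := opNorm_comp_le _ _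
    _ ≤ ‖T.comp (snd 𝕜 E F)‖ := mul_le_of_le_one_right (norm_nonneg _) (norm_inr_le_one 𝕜 E F)

def shear (M : F →L[𝕜] E) : (E × F) →L[𝕜] (E × F) :=
  (fst 𝕜 E F + M.comp (snd 𝕜 E F)).prod (snd 𝕜 E F)

theorem shear_comp_prod (M : F →L[𝕜] E) (f : G →L[𝕜] E) (g : G →L[𝕜] F) :
    (shear M).comp (f.prod g) = (f + M.comp g).prod g := by
  ext <;> simp [shear]

theorem shear_sub_id (M : F →L[𝕜] E) :
    shear M - ContinuousLinearMap.id 𝕜 (E × F) = (M.comp (snd 𝕜 E F)).prod 0 := by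
  ext <;> simp [shear]

theorem norm_shear_sub_id (M : F →L[𝕜] E) :
    ‖shear M - ContinuousLinearMap.id 𝕜 (E × F)‖ = ‖M‖ := by
  rw [shear_sub_id, opNorm_prod, Prod.norm_mk, norm_zero, opNorm_comp_snd,
    max_eq_left (norm_nonneg M)]

end OpNorm

section AllAtOnce

variable {𝕜 : Type*} [NontriviallyNormedField 𝕜]
  {X V W Y : Type*} [NormedAddCommGroup X] [NormedSpace 𝕜 X] [NormedAddCommGroup V]
  [NormedSpace 𝕜 V] [NormedAddCommGroup W] [NormedSpace 𝕜 W] [NormedAddCommGroup Y]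
  [NormedSpace 𝕜 Y]

def allAtOnceDeriv (L : X →L[𝕜] W) (C : V →L[𝕜] Y) (G : V →L[𝕜] W) : (X × V) →L[𝕜] (W × Y) :=
  (L.comp (fst 𝕜 X V) + G.comp (snd 𝕜 X V)).prod (C.comp (snd 𝕜 X V))

theorem HasFDerivAt.allAtOnce {f : V → W} {G : V →L[𝕜] W} {v : V} (hf : HasFDerivAt f G v)
    (L : X →L[𝕜] W) (C : V →L[𝕜] Y) (x : X) :
    HasFDerivAt (fun p : X × V => (f p.2 + L p.1, C p.2)) (allAtOnceDeriv L C G) (x, v) := by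
  have hfirst : HasFDerivAt (fun p : X × V => f p.2 + L p.1)
      (L.comp (fst 𝕜 X V) + G.comp (snd 𝕜 X V)) (x, v) :=
    ((hf.comp (x, v) hasFDerivAt_snd).add (L.hasFDerivAt.comp (x, v) hasFDerivAt_fst)).congr_fderiv
      (add_comm _ _)
  exact hfirst.prodMk (C.hasFDerivAt.comp (x, v) hasFDerivAt_snd)

theorem allAtOnceDeriv_add_comp (L : X →L[𝕜] W) (C : V →L[𝕜] Y) (G : V →L[𝕜] W)
    (M : Y →L[𝕜] W) :
    allAtOnceDeriv L C (G + M.comp C) = (shear M).comp (allAtOnceDeriv L C G) := by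
  rw [allAtOnceDeriv, allAtOnceDeriv, shear_comp_prod, add_comp, comp_assoc, add_assoc]

end AllAtOnce

theorem allAtOnce_adjoint_range_invariance_general
    {X V W Y : Type*}
    [NormedAddCommGroup X] [NormedSpace ℝ X]
    [NormedAddCommGroup V] [NormedSpace ℝ V]
    [NormedAddCommGroup W] [NormedSpace ℝ W]
    [NormedAddCommGroup Y] [NormedSpace ℝ Y]
    (L : X →L[ℝ] W) (C : V →L[ℝ] Y) (Ahat : V → W)
    (u utilde : V) (A' Atilde' : V →L[ℝ] W)
    (hu : HasFDerivAt Ahat A' u) (hutilde : HasFDerivAt Ahat Atilde' utilde)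
    (F : X × V → W × Y) (hF : ∀ p : X × V, F p = (Ahat p.2 + L p.1, C p.2))
    (DF : (V →L[ℝ] W) → (X × V →L[ℝ] W × Y))
    (hDF : ∀ G : V →L[ℝ] W,
      DF G = (L.comp (ContinuousLinearMap.fst ℝ X V)
                + G.comp (ContinuousLinearMap.snd ℝ X V)).prod
             (C.comp (ContinuousLinearMap.snd ℝ X V)))
    (M : Y →L[ℝ] W) (hM : M.comp C = Atilde' - A')
    (R : (W × Y) →L[ℝ] (W × Y))
    (hR : R = (ContinuousLinearMap.fst ℝ W Y
                + M.comp (ContinuousLinearMap.snd ℝ W Y)).prod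
              (ContinuousLinearMap.snd ℝ W Y)) :
    (∀ x : X, HasFDerivAt F (DF A') (x, u)) ∧
    (∀ xtilde : X, HasFDerivAt F (DF Atilde') (xtilde, utilde)) ∧
    DF Atilde' = R.comp (DF A') ∧
    ‖R - ContinuousLinearMap.id ℝ (W × Y)‖ = ‖M‖ := by
  obtain rfl : F = fun p => (Ahat p.2 + L p.1, C p.2) := funext hF
  obtain rfl : DF = allAtOnceDeriv L C := funext hDF
  obtain rfl : R = shear M := hR
  have hAtilde' : Atilde' = A' + M.comp C := by rw [hM, add_sub_cancel]
  refine ⟨hu.allAtOnce L C, hutilde.allAtOnce L C, ?_, norm_shear_sub_id M⟩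
  rw [hAtilde', allAtOnceDeriv_add_comp]

/-- Lemma 5.1(a): all-at-once adjoint range invariance for the affine-in-parameter
model `A(x,u) = Â(u) + L x` with linear observation `C`.  If the difference of the
derivatives of `Â` at `ũ` and `u` factors through `C` via a bounded operator `M`,
then `𝐅'(x̃,ũ) = R ∘ 𝐅'(x,u)` with `R(w,y) = (w + M y, y)`, and `‖R − Id‖ = ‖M‖`
(products carrying the supremum norm). -/
theorem allAtOnce_adjoint_range_invariance
    {X V W Y : Type*}
    [NormedAddCommGroup X] [NormedSpace ℝ X] [CompleteSpace X]
    [NormedAddCommGroup V] [NormedSpace ℝ V] [CompleteSpace V]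
    [NormedAddCommGroup W] [NormedSpace ℝ W] [CompleteSpace W]
    [NormedAddCommGroup Y] [NormedSpace ℝ Y] [CompleteSpace Y]
    (L : X →L[ℝ] W) (C : V →L[ℝ] Y) (Ahat : V → W)
    (u utilde : V) (A' Atilde' : V →L[ℝ] W)
    (hu : HasFDerivAt Ahat A' u) (hutilde : HasFDerivAt Ahat Atilde' utilde)
    (F : X × V → W × Y) (hF : ∀ p : X × V, F p = (Ahat p.2 + L p.1, C p.2))
    (DF : (V →L[ℝ] W) → (X × V →L[ℝ] W × Y))
    (hDF : ∀ G : V →L[ℝ] W,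
      DF G = (L.comp (ContinuousLinearMap.fst ℝ X V)
                + G.comp (ContinuousLinearMap.snd ℝ X V)).prod
             (C.comp (ContinuousLinearMap.snd ℝ X V)))
    (M : Y →L[ℝ] W) (hM : M.comp C = Atilde' - A')
    (R : (W × Y) →L[ℝ] (W × Y))
    (hR : R = (ContinuousLinearMap.fst ℝ W Y
                + M.comp (ContinuousLinearMap.snd ℝ W Y)).prod
              (ContinuousLinearMap.snd ℝ W Y)) :
    (∀ x : X, HasFDerivAt F (DF A') (x, u)) ∧
    (∀ xtilde : X, HasFDerivAt F (DF Atilde') (xtilde, utilde)) ∧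
    DF Atilde' = R.comp (DF A') ∧
    ‖R - ContinuousLinearMap.id ℝ (W × Y)‖ = ‖M‖ :=
  allAtOnce_adjoint_range_invariance_general L C Ahat u utilde A' Atilde' hu hutilde F hF DF hDF M
    hM R hR
end

section
/- Let X, V, W, Y be real Banach spaces, L : X → W and C : V → Y continuous linear maps, Â : V → W a map, and S : X → V a map satisfying Â(S x') + L x' = 0 for every x' ∈ X. Let x, x̃ ∈ X, assume S is Fréchet differentiable at x and at x̃, and assume Â is Fréchet differentiable at S x and at S x̃ with derivatives G := Â'(S x) and G̃ := Â'(S x̃) that are continuous linear isomorphisms from V onto W. Assume furthermore that C admits a continuous linear left inverse C† : Y → V with C† ∘ C = Id_V (corresponding to injectivity of C). Then the reduced forward operator F := C ∘ S is Fréchet differentiable at x and x̃ with F'(x) = −C ∘ G⁻¹ ∘ L and F'(x̃) = −C ∘ G̃⁻¹ ∘ L, and the reduced adjoint range invariance condition F'(x̃) = R ∘ F'(x) holds with R := C ∘ G̃⁻¹ ∘ G ∘ C†. -/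
section ImplicitDerivative

variable {𝕜 : Type*} [NontriviallyNormedField 𝕜]
  {E F H : Type*} [NormedAddCommGroup E] [NormedSpace 𝕜 E]
  [NormedAddCommGroup F] [NormedSpace 𝕜 F] [NormedAddCommGroup H] [NormedSpace 𝕜 H]

theorem HasFDerivAt.of_comp_of_hasFDerivAt_equiv {f : E → F} {g : F → H} {x : E}
    {h' : E →L[𝕜] H} {e : F ≃L[𝕜] H} (hgf : HasFDerivAt (g ∘ f) h' x)
    (hg : HasFDerivAt g (e : F →L[𝕜] H) (f x)) (hf : DifferentiableAt 𝕜 f x) :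
    HasFDerivAt f ((e.symm : H →L[𝕜] F).comp h') x := by
  have hchain : (e : F →L[𝕜] H).comp (fderiv 𝕜 f x) = h' :=
    (hg.comp x hf.hasFDerivAt).unique hgf
  rw [← (ContinuousLinearEquiv.eq_toContinuousLinearMap_symm_comp _ _).mpr hchain]
  exact hf.hasFDerivAt

theorem hasFDerivAt_of_apply_add_clm_eq_zero {A : F → H} {S : E → F} {x : E} (L : E →L[𝕜] H)
    (hmodel : ∀ x', A (S x') + L x' = 0) (hS : DifferentiableAt 𝕜 S x)
    (G : F ≃L[𝕜] H) (hA : HasFDerivAt A (G : F →L[𝕜] H) (S x)) :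
    HasFDerivAt S (-(G.symm : H →L[𝕜] F).comp L) x := by
  have hAS : A ∘ S = fun x' => -L x' :=
    funext fun x' => eq_neg_of_add_eq_zero_left (hmodel x')
  have hderiv : HasFDerivAt (A ∘ S) (-L) x := hAS ▸ L.hasFDerivAt.neg
  simpa only [ContinuousLinearMap.comp_neg] using hderiv.of_comp_of_hasFDerivAt_equiv hA hS

end ImplicitDerivative

theorem reduced_adjoint_range_invariance_general
    {X V W Y : Type*}
    [NormedAddCommGroup X] [NormedSpace ℝ X]
    [NormedAddCommGroup V] [NormedSpace ℝ V]
    [NormedAddCommGroup W] [NormedSpace ℝ W]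
    [NormedAddCommGroup Y] [NormedSpace ℝ Y]
    (L : X →L[ℝ] W) (C : V →L[ℝ] Y) (Ahat : V → W) (S : X → V)
    (hmodel : ∀ x' : X, Ahat (S x') + L x' = 0)
    (x xtilde : X)
    (hSx : DifferentiableAt ℝ S x) (hSxtilde : DifferentiableAt ℝ S xtilde)
    (G Gtilde : V ≃L[ℝ] W)
    (hG : HasFDerivAt Ahat (G : V →L[ℝ] W) (S x))
    (hGtilde : HasFDerivAt Ahat (Gtilde : V →L[ℝ] W) (S xtilde))
    (Cdag : Y →L[ℝ] V) (hCdag : Cdag.comp C = ContinuousLinearMap.id ℝ V)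
    (R : Y →L[ℝ] Y)
    (hR : R = C.comp (((Gtilde.symm : W →L[ℝ] V)).comp
            (((G : V →L[ℝ] W)).comp Cdag))) :
    HasFDerivAt (fun x' => C (S x'))
      (-(C.comp ((G.symm : W →L[ℝ] V).comp L))) x ∧
    HasFDerivAt (fun x' => C (S x'))
      (-(C.comp ((Gtilde.symm : W →L[ℝ] V).comp L))) xtilde ∧
    -(C.comp ((Gtilde.symm : W →L[ℝ] V).comp L)) =
      R.comp (-(C.comp ((G.symm : W →L[ℝ] V).comp L))) := by
  have hF : ∀ {z : X} (E : V ≃L[ℝ] W), DifferentiableAt ℝ S z →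
      HasFDerivAt Ahat (E : V →L[ℝ] W) (S z) →
      HasFDerivAt (fun x' => C (S x')) (-(C.comp ((E.symm : W →L[ℝ] V).comp L))) z :=
    fun E hS hA => by
      simpa only [ContinuousLinearMap.comp_neg, Function.comp_def] using
        C.hasFDerivAt.comp _ (hasFDerivAt_of_apply_add_clm_eq_zero L hmodel hS E hA)
  refine ⟨hF G hSx hG, hF Gtilde hSxtilde hGtilde, ?_⟩
  have hleft : ∀ v, Cdag (C v) = v := fun v => congr($hCdag v)
  ext v
  simp [hR, hleft]

/-- Lemma 5.1(c): reduced adjoint range invariance.  For the model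
`A(x,u) = Â(u) + L x` with parameter-to-state map `S` (i.e. `Â(S x') + L x' = 0`
for all `x'`), if the state derivatives `G = Â'(S x)`, `G̃ = Â'(S x̃)` are
isomorphisms and `C` has a bounded left inverse `C†`, then the reduced forward
operator `F = C ∘ S` has derivatives `F'(x) = −C ∘ G⁻¹ ∘ L`,
`F'(x̃) = −C ∘ G̃⁻¹ ∘ L`, and `F'(x̃) = R ∘ F'(x)` with `R = C ∘ G̃⁻¹ ∘ G ∘ C†`. -/
theorem reduced_adjoint_range_invariance
    {X V W Y : Type*}
    [NormedAddCommGroup X] [NormedSpace ℝ X] [CompleteSpace X]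
    [NormedAddCommGroup V] [NormedSpace ℝ V] [CompleteSpace V]
    [NormedAddCommGroup W] [NormedSpace ℝ W] [CompleteSpace W]
    [NormedAddCommGroup Y] [NormedSpace ℝ Y] [CompleteSpace Y]
    (L : X →L[ℝ] W) (C : V →L[ℝ] Y) (Ahat : V → W) (S : X → V)
    (hmodel : ∀ x' : X, Ahat (S x') + L x' = 0)
    (x xtilde : X)
    (hSx : DifferentiableAt ℝ S x) (hSxtilde : DifferentiableAt ℝ S xtilde)
    (G Gtilde : V ≃L[ℝ] W)
    (hG : HasFDerivAt Ahat (G : V →L[ℝ] W) (S x))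
    (hGtilde : HasFDerivAt Ahat (Gtilde : V →L[ℝ] W) (S xtilde))
    (Cdag : Y →L[ℝ] V) (hCdag : Cdag.comp C = ContinuousLinearMap.id ℝ V)
    (R : Y →L[ℝ] Y)
    (hR : R = C.comp (((Gtilde.symm : W →L[ℝ] V)).comp
            (((G : V →L[ℝ] W)).comp Cdag))) :
    HasFDerivAt (fun x' => C (S x'))
      (-(C.comp ((G.symm : W →L[ℝ] V).comp L))) x ∧
    HasFDerivAt (fun x' => C (S x'))
      (-(C.comp ((Gtilde.symm : W →L[ℝ] V).comp L))) xtilde ∧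
    -(C.comp ((Gtilde.symm : W →L[ℝ] V).comp L)) =
      R.comp (-(C.comp ((G.symm : W →L[ℝ] V).comp L))) :=
  reduced_adjoint_range_invariance_general L C Ahat S hmodel x xtilde hSx hSxtilde G Gtilde hG
    hGtilde Cdag hCdag R hR
end

section
/- Let X, V, W, Y be real Banach spaces, L : X → W and C : V → Y continuous linear maps, Â : V → W a map, and S : X → V a map satisfying Â(S x') + L x' = 0 for every x' ∈ X. Let x, x̃ ∈ X, assume S is Fréchet differentiable at x and at x̃, and assume Â is Fréchet differentiable at S x and at S x̃ with derivatives G := Â'(S x) and G̃ := Â'(S x̃) that are continuous linear isomorphisms from V onto W. Assume furthermore that L admits a continuous linear right inverse L† : W → X with L ∘ L† = Id_W (corresponding to surjectivity of L). Then the reduced forward operator F := C ∘ S is Fréchet differentiable at x and x̃ with F'(x) = −C ∘ G⁻¹ ∘ L and F'(x̃) = −C ∘ G̃⁻¹ ∘ L, and the reduced range invariance condition F'(x̃) = F'(x) ∘ R holds with R := L† ∘ G ∘ G̃⁻¹ ∘ L. -/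
/-! Differentiating the state equation `Â (S x') + L x' = 0` by the chain rule gives
`G ∘ S'(x) = -L`, so `S'(x) = -G⁻¹ ∘ L` and `F'(x) = -C ∘ G⁻¹ ∘ L`; the same holds at `x̃`.
Range invariance then only needs `L ∘ L† = id`, which cancels the middle of
`G⁻¹ ∘ L ∘ L† ∘ G ∘ G̃⁻¹ ∘ L = G̃⁻¹ ∘ L`. -/

section

variable {𝕜 X V W Y : Type*} [NontriviallyNormedField 𝕜]
  [NormedAddCommGroup X] [NormedSpace 𝕜 X] [NormedAddCommGroup V] [NormedSpace 𝕜 V]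
  [NormedAddCommGroup W] [NormedSpace 𝕜 W] [NormedAddCommGroup Y] [NormedSpace 𝕜 Y]

theorem hasFDerivAt_of_map_add_eq_zero {A : V → W} {S : X → V} {L : X →L[𝕜] W}
    (hmodel : ∀ x', A (S x') + L x' = 0) {x : X} (hS : DifferentiableAt 𝕜 S x)
    {G : V ≃L[𝕜] W} (hG : HasFDerivAt A (G : V →L[𝕜] W) (S x)) :
    HasFDerivAt S (-((G.symm : W →L[𝕜] V).comp L)) x := by
  have hAS : A ∘ S = -L := funext fun x' => eq_neg_of_add_eq_zero_left (hmodel x')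
  have hchain : (G : V →L[𝕜] W).comp (fderiv 𝕜 S x) = -L :=
    (hG.comp x hS.hasFDerivAt).unique (hAS ▸ (-L).hasFDerivAt)
  have hS' : fderiv 𝕜 S x = -((G.symm : W →L[𝕜] V).comp L) := by
    ext v
    simpa using congrArg (fun T : X →L[𝕜] W => G.symm (T v)) hchain
  exact hS' ▸ hS.hasFDerivAt

theorem comp_symm_comp_rightInverse_comp (C : V →L[𝕜] Y) (G : V ≃L[𝕜] W)
    {L : X →L[𝕜] W} {Ldag : W →L[𝕜] X} (hLdag : L.comp Ldag = ContinuousLinearMap.id 𝕜 W)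
    (M : X →L[𝕜] V) :
    (C.comp ((G.symm : W →L[𝕜] V).comp L)).comp (Ldag.comp ((G : V →L[𝕜] W).comp M)) =
      C.comp M := by
  ext v
  simp [← ContinuousLinearMap.comp_apply L Ldag, hLdag]

end

theorem reduced_range_invariance_general
    {X V W Y : Type*}
    [NormedAddCommGroup X] [NormedSpace ℝ X]
    [NormedAddCommGroup V] [NormedSpace ℝ V]
    [NormedAddCommGroup W] [NormedSpace ℝ W]
    [NormedAddCommGroup Y] [NormedSpace ℝ Y]
    (L : X →L[ℝ] W) (C : V →L[ℝ] Y) (Ahat : V → W) (S : X → V)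
    (hmodel : ∀ x' : X, Ahat (S x') + L x' = 0)
    (x xtilde : X)
    (hSx : DifferentiableAt ℝ S x) (hSxtilde : DifferentiableAt ℝ S xtilde)
    (G Gtilde : V ≃L[ℝ] W)
    (hG : HasFDerivAt Ahat (G : V →L[ℝ] W) (S x))
    (hGtilde : HasFDerivAt Ahat (Gtilde : V →L[ℝ] W) (S xtilde))
    (Ldag : W →L[ℝ] X) (hLdag : L.comp Ldag = ContinuousLinearMap.id ℝ W)
    (R : X →L[ℝ] X)
    (hR : R = Ldag.comp (((G : V →L[ℝ] W)).comp
            ((Gtilde.symm : W →L[ℝ] V).comp L))) :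
    HasFDerivAt (fun x' => C (S x'))
      (-(C.comp ((G.symm : W →L[ℝ] V).comp L))) x ∧
    HasFDerivAt (fun x' => C (S x'))
      (-(C.comp ((Gtilde.symm : W →L[ℝ] V).comp L))) xtilde ∧
    -(C.comp ((Gtilde.symm : W →L[ℝ] V).comp L)) =
      (-(C.comp ((G.symm : W →L[ℝ] V).comp L))).comp R := by
  refine ⟨?_, ?_, ?_⟩
  · exact (C.hasFDerivAt.comp x (hasFDerivAt_of_map_add_eq_zero hmodel hSx hG)).congr_fderiv
      (C.comp_neg _)
  · exact (C.hasFDerivAt.comp xtilde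
      (hasFDerivAt_of_map_add_eq_zero hmodel hSxtilde hGtilde)).congr_fderiv (C.comp_neg _)
  · rw [hR, ContinuousLinearMap.neg_comp, comp_symm_comp_rightInverse_comp C G hLdag]

/-- Lemma 5.1(d): reduced range invariance.  For the model
`A(x,u) = Â(u) + L x` with parameter-to-state map `S` (i.e. `Â(S x') + L x' = 0`
for all `x'`), if the state derivatives `G = Â'(S x)`, `G̃ = Â'(S x̃)` are
isomorphisms and `L` has a bounded right inverse `L†`, then the reduced forward
operator `F = C ∘ S` has derivatives `F'(x) = −C ∘ G⁻¹ ∘ L`,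
`F'(x̃) = −C ∘ G̃⁻¹ ∘ L`, and `F'(x̃) = F'(x) ∘ R` with `R = L† ∘ G ∘ G̃⁻¹ ∘ L`. -/
theorem reduced_range_invariance
    {X V W Y : Type*}
    [NormedAddCommGroup X] [NormedSpace ℝ X] [CompleteSpace X]
    [NormedAddCommGroup V] [NormedSpace ℝ V] [CompleteSpace V]
    [NormedAddCommGroup W] [NormedSpace ℝ W] [CompleteSpace W]
    [NormedAddCommGroup Y] [NormedSpace ℝ Y] [CompleteSpace Y]
    (L : X →L[ℝ] W) (C : V →L[ℝ] Y) (Ahat : V → W) (S : X → V)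
    (hmodel : ∀ x' : X, Ahat (S x') + L x' = 0)
    (x xtilde : X)
    (hSx : DifferentiableAt ℝ S x) (hSxtilde : DifferentiableAt ℝ S xtilde)
    (G Gtilde : V ≃L[ℝ] W)
    (hG : HasFDerivAt Ahat (G : V →L[ℝ] W) (S x))
    (hGtilde : HasFDerivAt Ahat (Gtilde : V →L[ℝ] W) (S xtilde))
    (Ldag : W →L[ℝ] X) (hLdag : L.comp Ldag = ContinuousLinearMap.id ℝ W)
    (R : X →L[ℝ] X)
    (hR : R = Ldag.comp (((G : V →L[ℝ] W)).comp
            ((Gtilde.symm : W →L[ℝ] V).comp L))) :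
    HasFDerivAt (fun x' => C (S x'))
      (-(C.comp ((G.symm : W →L[ℝ] V).comp L))) x ∧
    HasFDerivAt (fun x' => C (S x'))
      (-(C.comp ((Gtilde.symm : W →L[ℝ] V).comp L))) xtilde ∧
    -(C.comp ((Gtilde.symm : W →L[ℝ] V).comp L)) =
      (-(C.comp ((G.symm : W →L[ℝ] V).comp L))).comp R :=
  reduced_range_invariance_general L C Ahat S hmodel x xtilde hSx hSxtilde G Gtilde hG hGtilde Ldag
    hLdag R hR
end

section
/- Let X, V, W, Y be real Banach spaces, A : X × V → W and C : V → Y arbitrary maps, and let D ⊆ X × V. Let (x†,u†) ∈ D satisfy A(x†,u†) = 0 and C(u†) = y, and let yδ ∈ Y satisfy ‖y − yδ‖ ≤ δ for some δ ≥ 0. Fix ρ > 0, α > 0, m, o, r ∈ [1,∞), x₀ ∈ X, and suppose (xα,uα) ∈ D minimizes over D the all-at-once Tikhonov functional T(x,u) := (ρ/m)‖A(x,u)‖^m + (1/o)‖C(u) − yδ‖^o + (α/r)‖x − x₀‖^r. Then: (i) (1/r)‖xα − x₀‖^r ≤ (1/r)‖x† − x₀‖^r + δ^o/(oα); and (ii)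 if in addition the lower bound of the discrepancy principle holds, namely δ^o/o ≤ (ρ/m)‖A(xα,uα)‖^m + (1/o)‖C(uα) − yδ‖^o, then ‖xα − x₀‖^r ≤ ‖x† − x₀‖^r. -/
/-- Boundedness estimate (2.13) for the parameter component of all-at-once
Tikhonov minimizers, with regularization applied only to the parameter `x`:
(i) the a priori bound `(1/r)‖xα−x₀‖^r ≤ (1/r)‖x†−x₀‖^r + δ^o/(oα)`, and
(ii) under the lower bound of the discrepancy principle,
`‖xα−x₀‖^r ≤ ‖x†−x₀‖^r`. -/
theorem allAtOnce_Tikhonov_parameter_bound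
    {X V W Y : Type*}
    [NormedAddCommGroup X] [NormedSpace ℝ X] [CompleteSpace X]
    [NormedAddCommGroup V] [NormedSpace ℝ V] [CompleteSpace V]
    [NormedAddCommGroup W] [NormedSpace ℝ W] [CompleteSpace W]
    [NormedAddCommGroup Y] [NormedSpace ℝ Y] [CompleteSpace Y]
    (A : X × V → W) (C : V → Y) (D : Set (X × V))
    (xdag : X) (udag : V) (hdagD : (xdag, udag) ∈ D)
    (hAdag : A (xdag, udag) = 0) (y : Y) (hCdag : C udag = y)
    (yδ : Y) (δ : ℝ) (hδ : 0 ≤ δ) (hnoise : ‖y - yδ‖ ≤ δ)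
    (ρ α m o r : ℝ) (hρ : 0 < ρ) (hα : 0 < α)
    (hm : 1 ≤ m) (ho : 1 ≤ o) (hr : 1 ≤ r)
    (x₀ : X) (xα : X) (uα : V) (hmem : (xα, uα) ∈ D)
    (hmin : ∀ p ∈ D,
      ρ / m * ‖A (xα, uα)‖ ^ m + 1 / o * ‖C uα - yδ‖ ^ o + α / r * ‖xα - x₀‖ ^ r
        ≤ ρ / m * ‖A p‖ ^ m + 1 / o * ‖C p.2 - yδ‖ ^ o + α / r * ‖p.1 - x₀‖ ^ r) :
    1 / r * ‖xα - x₀‖ ^ r ≤ 1 / r * ‖xdag - x₀‖ ^ r + δ ^ o / (o * α) ∧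
    (δ ^ o / o ≤ ρ / m * ‖A (xα, uα)‖ ^ m + 1 / o * ‖C uα - yδ‖ ^ o →
      ‖xα - x₀‖ ^ r ≤ ‖xdag - x₀‖ ^ r) := by
  have ho0 : (0:ℝ) < o := lt_of_lt_of_le one_pos ho
  have hr0 : (0:ℝ) < r := lt_of_lt_of_le one_pos hr
  have hm0 : (0:ℝ) < m := lt_of_lt_of_le one_pos hm
  have key := hmin (xdag, udag) hdagD
  rw [hAdag, hCdag] at key
  have h0 : ‖(0:W)‖ ^ m = 0 := by
    rw [norm_zero, Real.zero_rpow hm0.ne']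
  simp only [] at key
  rw [h0, mul_zero, zero_add] at key
  have hle : ‖y - yδ‖ ^ o ≤ δ ^ o :=
    Real.rpow_le_rpow (norm_nonneg _) hnoise ho0.le
  have ha : 0 ≤ ρ / m * ‖A (xα, uα)‖ ^ m := by positivity
  have hb : 0 ≤ 1 / o * ‖C uα - yδ‖ ^ o := by positivity
  have hxα : 0 ≤ ‖xα - x₀‖ ^ r := by positivity
  have hxd : 0 ≤ ‖xdag - x₀‖ ^ r := by positivity
  have hyo : 1 / o * ‖y - yδ‖ ^ o ≤ δ ^ o / o := by
    calc 1 / o * ‖y - yδ‖ ^ o ≤ 1 / o * δ ^ o := by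
          exact mul_le_mul_of_nonneg_left hle (by positivity)
      _ = δ ^ o / o := by ring
  have key2 : α / r * ‖xα - x₀‖ ^ r ≤ δ ^ o / o + α / r * ‖xdag - x₀‖ ^ r := by
    linarith
  constructor
  · have h1 : α * (1 / r * ‖xα - x₀‖ ^ r) ≤ α * (1 / r * ‖xdag - x₀‖ ^ r + δ ^ o / (o * α)) := by
      have : α * (δ ^ o / (o * α)) = δ ^ o / o := by
        field_simp
      calc α * (1 / r * ‖xα - x₀‖ ^ r) = α / r * ‖xα - x₀‖ ^ r := by ring
        _ ≤ δ ^ o / o + α / r * ‖xdag - x₀‖ ^ r := key2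
        _ = α * (1 / r * ‖xdag - x₀‖ ^ r + δ ^ o / (o * α)) := by
            rw [mul_add, this]; ring
    exact le_of_mul_le_mul_left h1 hα
  · intro hdisc
    have hc : α / r * ‖xα - x₀‖ ^ r ≤ α / r * ‖xdag - x₀‖ ^ r := by
      linarith [key, hyo, hdisc]
    have hαr : 0 < α / r := by positivity
    exact le_of_mul_le_mul_left hc hαr
end

section
/- Let X, V, W, Y be real Banach spaces, A : X × V → W Fréchet differentiable at (x†,u†) and C : V → Y Fréchet differentiable at u†, with A(x†,u†) = 0 and C(u†) = y; let yδ ∈ Y with ‖y − yδ‖ ≤ δ, δ > 0. Fix ρ > 0, m, o, r, q ∈ [1,∞), t > 1, τ > 0, C̄_L ≥ 0, L ≥ 0, x₀ ∈ X, u₀ ∈ V, and D ⊆ X × V. Set R₂(x,u) := (1/r)‖x − x₀‖^r + (1/q)‖u − u₀‖^q, let ξ be a continuous linear functional on X × V satisfying the subgradient inequality R₂(x,u) ≥ R₂(x†,u†) + ξ(x − x†, u − u†) for all (x,u) ∈ X × V, and define the Bregman distance D_ξ(x,u) := R₂(x,u) − R₂(x†,u†) − ξ(x − x†, u − u†). Denote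 by 𝐅'(x†,u†) the continuous linear map (h,w) ↦ (A'(x†,u†)(h,w), C'(u†)w) from X × V to W × Y, and assume the source condition ξ = v ∘ 𝐅'(x†,u†) for some continuous linear functional v on W × Y (equipped with the supremum norm) with L‖v‖ < 1. Suppose (x,u) ∈ D satisfies: (i) ‖A'(x†,u†)(x − x†, u − u†)‖ + ‖C'(u†)(u − u†)‖ ≤ C̄_L ((ρ/m)‖A(x,u)‖^m + (1/o)‖C(u) − y‖^o)^{1/t} + L·D_ξ(x,u); (ii) R₂(x,u) ≤ R₂(x†,u†); and (iii) (ρ/m)‖A(x,u)‖^m + (1/o)‖C(u) − yδ‖^o ≤ τ δ^o/o. Then D_ξ(x,u) ≤ (1 − L‖v‖)⁻¹ ‖v‖ C̄_L (2^{o−1}(τ+1) δ^o/o)^{1/t}; in particular D_ξ(x,u) = O(δ^{o/t}). -/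
/-- `(a+b)^p ≤ 2^(p-1) (a^p + b^p)` for nonnegative reals and `p ≥ 1`. -/
lemma aux_rpow_add_le (a b p : ℝ) (ha : 0 ≤ a) (hb : 0 ≤ b) (hp : 1 ≤ p) :
    (a + b) ^ p ≤ 2 ^ (p - 1) * (a ^ p + b ^ p) := by
  have h := NNReal.rpow_add_le_mul_rpow_add_rpow a.toNNReal b.toNNReal hp
  have h2 := NNReal.coe_le_coe.2 h
  push_cast at h2
  simpa [Real.coe_toNNReal a ha, Real.coe_toNNReal b hb] using h2

/-- Convergence rate for all-at-once regularization under the discrepancy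
principle (Propositions 2.2 / 3.3): if the local smoothness condition
(Assumption 2.7) holds at `(x,u)`, the regularized element satisfies
`R₂(x,u) ≤ R₂(x†,u†)` and the upper discrepancy bound, and the source condition
`ξ = v ∘ 𝐅'(x†,u†)` holds with `L‖v‖ < 1`, then
`D_ξ(x,u) ≤ (1−L‖v‖)⁻¹‖v‖ C̄_L (2^{o−1}(τ+1)δ^o/o)^{1/t}`. -/
theorem allAtOnce_rate_discrepancy
    {X V W Y : Type*}
    [NormedAddCommGroup X] [NormedSpace ℝ X] [CompleteSpace X]
    [NormedAddCommGroup V] [NormedSpace ℝ V] [CompleteSpace V]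
    [NormedAddCommGroup W] [NormedSpace ℝ W] [CompleteSpace W]
    [NormedAddCommGroup Y] [NormedSpace ℝ Y] [CompleteSpace Y]
    (A : X × V → W) (C : V → Y)
    (xdag : X) (udag : V) (A' : X × V →L[ℝ] W) (C' : V →L[ℝ] Y)
    (hA : HasFDerivAt A A' (xdag, udag)) (hC : HasFDerivAt C C' udag)
    (hAdag : A (xdag, udag) = 0) (y : Y) (hCdag : C udag = y)
    (yδ : Y) (δ : ℝ) (hδ : 0 < δ) (hnoise : ‖y - yδ‖ ≤ δ)
    (ρ m o r q t τ CL L : ℝ)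
    (hρ : 0 < ρ) (hm : 1 ≤ m) (ho : 1 ≤ o) (hr : 1 ≤ r) (hq : 1 ≤ q)
    (ht : 1 < t) (hτ : 0 < τ) (hCL : 0 ≤ CL) (hL : 0 ≤ L)
    (x₀ : X) (u₀ : V) (D : Set (X × V))
    (R₂ : X × V → ℝ)
    (hR₂ : ∀ p : X × V, R₂ p = 1 / r * ‖p.1 - x₀‖ ^ r + 1 / q * ‖p.2 - u₀‖ ^ q)
    (ξ : (X × V) →L[ℝ] ℝ)
    (hsub : ∀ p : X × V, R₂ (xdag, udag) + ξ (p.1 - xdag, p.2 - udag) ≤ R₂ p)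
    (Dξ : X × V → ℝ)
    (hDξ : ∀ p : X × V,
      Dξ p = R₂ p - R₂ (xdag, udag) - ξ (p.1 - xdag, p.2 - udag))
    (F' : (X × V) →L[ℝ] W × Y)
    (hF' : F' = A'.prod (C'.comp (ContinuousLinearMap.snd ℝ X V)))
    (v : (W × Y) →L[ℝ] ℝ) (hsc : ξ = v.comp F') (hvsmall : L * ‖v‖ < 1)
    (x : X) (u : V) (hmem : (x, u) ∈ D)
    (hsmooth : ‖A' (x - xdag, u - udag)‖ + ‖C' (u - udag)‖
        ≤ CL * (ρ / m * ‖A (x, u)‖ ^ m + 1 / o * ‖C u - y‖ ^ o) ^ (1 / t)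
          + L * Dξ (x, u))
    (hbound : R₂ (x, u) ≤ R₂ (xdag, udag))
    (hdisc : ρ / m * ‖A (x, u)‖ ^ m + 1 / o * ‖C u - yδ‖ ^ o ≤ τ * δ ^ o / o) :
    Dξ (x, u) ≤ (1 - L * ‖v‖)⁻¹ * ‖v‖ * CL
      * ((2 : ℝ) ^ (o - 1) * (τ + 1) * δ ^ o / o) ^ (1 / t) := by
  set p : X × V := (x - xdag, u - udag) with hp
  -- basic positivity facts
  have ho0 : (0:ℝ) < o := by linarith
  have ht0 : (0:ℝ) < 1 / t := by positivity
  have hAm : (0:ℝ) ≤ ρ / m * ‖A (x, u)‖ ^ m := by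
    have : (0:ℝ) ≤ ‖A (x, u)‖ ^ m := Real.rpow_nonneg (norm_nonneg _) m
    have hρm : (0:ℝ) ≤ ρ / m := by positivity
    exact mul_nonneg hρm this
  have h2o : (1:ℝ) ≤ (2:ℝ) ^ (o - 1) :=
    Real.one_le_rpow one_le_two (by linarith)
  set S : ℝ := ρ / m * ‖A (x, u)‖ ^ m + 1 / o * ‖C u - y‖ ^ o with hS
  set B : ℝ := (2 : ℝ) ^ (o - 1) * (τ + 1) * δ ^ o / o with hB
  have hS0 : 0 ≤ S := by
    have : (0:ℝ) ≤ ‖C u - y‖ ^ o := Real.rpow_nonneg (norm_nonneg _) o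
    have h1o : (0:ℝ) ≤ 1 / o := by positivity
    exact add_nonneg hAm (mul_nonneg h1o this)
  -- Step 1: S ≤ B
  have hSB : S ≤ B := by
    have htri : ‖C u - y‖ ≤ ‖C u - yδ‖ + δ := by
      calc ‖C u - y‖ = ‖(C u - yδ) + (yδ - y)‖ := by rw [sub_add_sub_cancel]
        _ ≤ ‖C u - yδ‖ + ‖yδ - y‖ := norm_add_le _ _
        _ ≤ ‖C u - yδ‖ + δ := by
            have : ‖yδ - y‖ = ‖y - yδ‖ := norm_sub_rev _ _
            linarith
    have h1 : ‖C u - y‖ ^ o ≤ (‖C u - yδ‖ + δ) ^ o :=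
      Real.rpow_le_rpow (norm_nonneg _) htri (le_of_lt ho0)
    have h2 : (‖C u - yδ‖ + δ) ^ o
        ≤ 2 ^ (o - 1) * (‖C u - yδ‖ ^ o + δ ^ o) :=
      aux_rpow_add_le _ _ o (norm_nonneg _) hδ.le ho
    have h1o : (0:ℝ) ≤ 1 / o := by positivity
    have h3 : 1 / o * ‖C u - y‖ ^ o
        ≤ 2 ^ (o - 1) * (1 / o * ‖C u - yδ‖ ^ o) + 2 ^ (o - 1) * (δ ^ o / o) := by
      have := mul_le_mul_of_nonneg_left (h1.trans h2) h1o
      calc 1 / o * ‖C u - y‖ ^ o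
          ≤ 1 / o * (2 ^ (o - 1) * (‖C u - yδ‖ ^ o + δ ^ o)) := this
        _ = 2 ^ (o - 1) * (1 / o * ‖C u - yδ‖ ^ o) + 2 ^ (o - 1) * (δ ^ o / o) := by
            ring
    have h4 : ρ / m * ‖A (x, u)‖ ^ m
        ≤ 2 ^ (o - 1) * (ρ / m * ‖A (x, u)‖ ^ m) :=
      le_mul_of_one_le_left hAm h2o
    have h5 : S ≤ 2 ^ (o - 1) * (ρ / m * ‖A (x, u)‖ ^ m + 1 / o * ‖C u - yδ‖ ^ o)
        + 2 ^ (o - 1) * (δ ^ o / o) := by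
      rw [hS]; linarith [h3, h4]
    have h6 : 2 ^ (o - 1) * (ρ / m * ‖A (x, u)‖ ^ m + 1 / o * ‖C u - yδ‖ ^ o)
        ≤ 2 ^ (o - 1) * (τ * δ ^ o / o) :=
      mul_le_mul_of_nonneg_left hdisc (by positivity)
    have : S ≤ 2 ^ (o - 1) * (τ * δ ^ o / o) + 2 ^ (o - 1) * (δ ^ o / o) :=
      h5.trans (by linarith)
    calc S ≤ 2 ^ (o - 1) * (τ * δ ^ o / o) + 2 ^ (o - 1) * (δ ^ o / o) := this
      _ = B := by rw [hB]; ring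
  -- Step 2: Dξ ≤ -ξ p ≤ ‖v‖ ‖F' p‖ ≤ ‖v‖ (CL S^{1/t} + L Dξ)
  have hD1 : Dξ (x, u) ≤ -ξ p := by
    rw [hDξ (x, u)]
    simp only [hp]
    linarith
  have hD2 : -ξ p ≤ ‖v‖ * ‖F' p‖ := by
    rw [hsc]
    calc -(v.comp F') p ≤ |(v.comp F') p| := neg_le_abs _
      _ = |v (F' p)| := rfl
      _ ≤ ‖v‖ * ‖F' p‖ := by
          simpa [Real.norm_eq_abs] using v.le_opNorm (F' p)
  have hF'p : ‖F' p‖ ≤ ‖A' p‖ + ‖C' (u - udag)‖ := by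
    rw [hF']
    have : (A'.prod (C'.comp (ContinuousLinearMap.snd ℝ X V))) p
        = (A' p, C' (u - udag)) := by
      simp [hp, ContinuousLinearMap.prod_apply]
    rw [this, Prod.norm_def]
    exact max_le (le_add_of_nonneg_right (norm_nonneg _))
      (le_add_of_nonneg_left (norm_nonneg _))
  have hD3 : Dξ (x, u) ≤ ‖v‖ * (CL * S ^ (1 / t) + L * Dξ (x, u)) := by
    have h := hD1.trans hD2
    have h2 : ‖v‖ * ‖F' p‖ ≤ ‖v‖ * (CL * S ^ (1 / t) + L * Dξ (x, u)) := by
      apply mul_le_mul_of_nonneg_left _ (norm_nonneg v)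
      exact hF'p.trans hsmooth
    exact h.trans h2
  -- Step 3: solve for Dξ
  have hSt : S ^ (1 / t) ≤ B ^ (1 / t) := Real.rpow_le_rpow hS0 hSB ht0.le
  have hkey : (1 - L * ‖v‖) * Dξ (x, u) ≤ ‖v‖ * CL * B ^ (1 / t) := by
    have hvCL : 0 ≤ ‖v‖ * CL := mul_nonneg (norm_nonneg _) hCL
    have hexp : ‖v‖ * (CL * S ^ (1 / t) + L * Dξ (x, u))
        = ‖v‖ * CL * S ^ (1 / t) + L * ‖v‖ * Dξ (x, u) := by ring
    have h' := hD3
    rw [hexp] at h'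
    have hst := mul_le_mul_of_nonneg_left hSt hvCL
    linarith
  have hpos : (0:ℝ) < 1 - L * ‖v‖ := by linarith
  have : Dξ (x, u) = (1 - L * ‖v‖)⁻¹ * ((1 - L * ‖v‖) * Dξ (x, u)) := by
    field_simp
  rw [this, mul_assoc, mul_assoc]
  exact mul_le_mul_of_nonneg_left (by linarith [hkey]) (inv_nonneg.2 hpos.le)
end

section
/- Let X, V, W, Y be real Banach spaces, A : X × V → W Fréchet differentiable at (x†,u†) and C : V → Y Fréchet differentiable at u†, with A(x†,u†) = 0 and C(u†) = y. Fix ρ > 0, m, o, r, q ∈ [1,∞), t > 1, C̄_L ≥ 0, L ≥ 0, c_α > 0, x₀ ∈ X, u₀ ∈ V, D ⊆ X × V, and set R₂(x,u) := (1/r)‖x − x₀‖^r + (1/q)‖u − u₀‖^q. Let ξ be a continuous linear functional on X × V with R₂(x,u) ≥ R₂(x†,u†) + ξ(x − x†, u − u†) for all (x,u), define the Bregman distance D_ξ(x,u) := R₂(x,u) − R₂(x†,u†) − ξ(x − x†, u − u†), and assume the source condition ξ = v ∘ 𝐅'(x†,u†) for some continuous linear functional v on W × Y (supremum norm) with L‖v‖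 < 1, where 𝐅'(x†,u†)(h,w) = (A'(x†,u†)(h,w), C'(u†)w). Assume that for all (x,u) ∈ D: ‖A'(x†,u†)(x − x†, u − u†)‖ + ‖C'(u†)(u − u†)‖ ≤ C̄_L ((ρ/m)‖A(x,u)‖^m + (1/o)‖C(u) − y‖^o)^{1/t} + L·D_ξ(x,u). Then there exists a constant K, depending only on o, t, ρ, m, c_α, ‖v‖, C̄_L and L but not on δ, such that: for every δ > 0, every yδ ∈ Y with ‖y − yδ‖ ≤ δ, and every (xα,uα) ∈ D satisfying the minimality estimate (ρ/m)‖A(xα,uα)‖^m + (1/o)‖C(uα) − yδ‖^o + α R₂(xα,uα) ≤ δ^o/o + α R₂(x†,u†) with the a priori parameter choice α = c_α δ^{o(t−1)/t}, one has D_ξ(xα,uα) ≤ K δ^{o/t}. -/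
/-!
Subtracting `R₂(x†,u†) + ξ(Δ)` from the minimality estimate and bounding `ξ(Δ) = v(𝐅'Δ)` by the
source condition and the smoothness inequality yields the variational inequality
`T + α (1 - L‖v‖) D_ξ ≤ δ^o/o + α ‖v‖ C̄_L S^{1/t}`, where `S` and `T` are the residuals for exact
and noisy data. As `S ≤ 2^{o-1} (T + δ^o/o)`, this gives `S ≲ δ^o + α S^{1/t}`, hence `S = O(δ^o)`
after absorbing `S^{1/t}`; inserting this back and dividing by `α` gives `D_ξ = O(δ^{o/t})`.
In the variable `ε = δ^{o/t}` one has `α = c_α ε^{t-1}` and `δ^o = ε^t`, so every estimate is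
homogeneous in `ε`.
-/

open Real

lemma Real.rpow_add_le_mul_rpow_add_rpow {x y p : ℝ} (hx : 0 ≤ x) (hy : 0 ≤ y) (hp : 1 ≤ p) :
    (x + y) ^ p ≤ 2 ^ (p - 1) * (x ^ p + y ^ p) := by
  exact_mod_cast NNReal.rpow_add_le_mul_rpow_add_rpow ⟨x, hx⟩ ⟨y, hy⟩ hp

lemma norm_sub_rpow_le_of_norm_sub_le {E : Type*} [SeminormedAddCommGroup E] {z y yδ : E}
    {δ p : ℝ} (hp : 1 ≤ p) (hy : ‖y - yδ‖ ≤ δ) :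
    ‖z - y‖ ^ p ≤ 2 ^ (p - 1) * (‖z - yδ‖ ^ p + δ ^ p) := by
  have htri : ‖z - y‖ ≤ ‖z - yδ‖ + δ := by
    calc ‖z - y‖ ≤ ‖z - yδ‖ + ‖yδ - y‖ := norm_sub_le_norm_sub_add_norm_sub z yδ y
      _ ≤ ‖z - yδ‖ + δ := by rw [norm_sub_rev yδ y]; linarith
  calc ‖z - y‖ ^ p ≤ (‖z - yδ‖ + δ) ^ p :=
        rpow_le_rpow (norm_nonneg _) htri (by linarith)
    _ ≤ _ := rpow_add_le_mul_rpow_add_rpow (norm_nonneg _) ((norm_nonneg _).trans hy) hp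

lemma abs_apply_prod_le {E F : Type*} [SeminormedAddCommGroup E] [NormedSpace ℝ E]
    [SeminormedAddCommGroup F] [NormedSpace ℝ F] (v : E × F →L[ℝ] ℝ) (e : E) (f : F) :
    |v (e, f)| ≤ ‖v‖ * (‖e‖ + ‖f‖) := by
  rw [← Real.norm_eq_abs]
  calc ‖v (e, f)‖ ≤ ‖v‖ * ‖(e, f)‖ := v.le_opNorm _
    _ ≤ ‖v‖ * (‖e‖ + ‖f‖) := by
      gcongr
      exact max_le_add_of_nonneg (norm_nonneg e) (norm_nonneg f)

lemma le_two_mul_add_rpow_of_le_add_mul_rpow {S a b t : ℝ} (ht : 1 < t) (ha : 0 ≤ a)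
    (hb : 0 ≤ b) (h : S ≤ a + b * S ^ (1 / t)) : S ≤ 2 * a + (2 * b) ^ (t / (t - 1)) := by
  by_cases hSa : S ≤ 2 * a
  · linarith [rpow_nonneg (mul_nonneg zero_le_two hb) (t / (t - 1))]
  have hS : 0 < S := by linarith
  have hsplit : S ^ ((t - 1) / t) * S ^ (1 / t) = S := by
    rw [← rpow_add hS, ← add_div, sub_add_cancel, div_self (by linarith), rpow_one]
  have hpow : S ^ ((t - 1) / t) ≤ 2 * b :=
    le_of_mul_le_mul_right (by linarith) (rpow_pos_of_pos hS (1 / t))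
  calc S = (S ^ ((t - 1) / t)) ^ (t / (t - 1)) := by
        rw [← rpow_mul hS.le, div_mul_div_cancel₀ (by linarith), div_self (by linarith), rpow_one]
    _ ≤ (2 * b) ^ (t / (t - 1)) := by gcongr
    _ ≤ _ := by linarith

lemma le_mul_rpow_of_le_mul_rpow_add_mul_rpow {S a b t ε : ℝ} (ht : 1 < t) (ha : 0 ≤ a)
    (hb : 0 ≤ b) (hε : 0 ≤ ε) (h : S ≤ a * ε ^ t + b * ε ^ (t - 1) * S ^ (1 / t)) :
    S ≤ (2 * a + (2 * b) ^ (t / (t - 1))) * ε ^ t := by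
  have hεt : (ε ^ (t - 1)) ^ (t / (t - 1)) = ε ^ t := by
    rw [← rpow_mul hε, mul_div_cancel₀ _ (by linarith)]
  calc S ≤ 2 * (a * ε ^ t) + (2 * (b * ε ^ (t - 1))) ^ (t / (t - 1)) :=
        le_two_mul_add_rpow_of_le_add_mul_rpow ht (by positivity) (by positivity) h
    _ = _ := by
      rw [← mul_assoc 2 b, mul_rpow (by positivity) (by positivity), hεt]
      ring

lemma exists_rate_of_variational_ineq {a c cα μ b t : ℝ} (ht : 1 < t) (ha : 0 ≤ a)
    (hc : 0 ≤ c) (hcα : 0 < cα) (hμ : 0 < μ) (hb : 0 ≤ b) :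
    ∃ K, ∀ ε T S d : ℝ, 0 < ε → 0 ≤ T → 0 ≤ S → 0 ≤ d →
      T + cα * ε ^ (t - 1) * μ * d ≤ a * ε ^ t + cα * ε ^ (t - 1) * b * S ^ (1 / t) →
      S ≤ c * (T + a * ε ^ t) → d ≤ K * ε := by
  set K₁ := 2 * (2 * c * a) + (2 * (c * cα * b)) ^ (t / (t - 1))
  have hK₁ : 0 ≤ K₁ := by positivity
  refine ⟨(a / cα + b * K₁ ^ (1 / t)) / μ, fun ε T S d hε hT hS hd hvar hmisfit => ?_⟩
  have hα : 0 < cα * ε ^ (t - 1) := by positivity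
  have hS_le : S ≤ K₁ * ε ^ t := by
    refine le_mul_rpow_of_le_mul_rpow_add_mul_rpow ht (by positivity) (by positivity) hε.le ?_
    have : 0 ≤ cα * ε ^ (t - 1) * μ * d := by positivity
    nlinarith
  have hS_root : S ^ (1 / t) ≤ K₁ ^ (1 / t) * ε := by
    calc S ^ (1 / t) ≤ (K₁ * ε ^ t) ^ (1 / t) := by gcongr
      _ = K₁ ^ (1 / t) * ε := by
        rw [mul_rpow hK₁ (by positivity), ← rpow_mul hε.le, mul_one_div_cancel (by linarith),
          rpow_one]
  have hεt : ε ^ t = ε ^ (t - 1) * ε := by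
    rw [← rpow_add_one hε.ne', sub_add_cancel]
  rw [div_mul_eq_mul_div, le_div_iff₀ hμ]
  refine le_of_mul_le_mul_left ?_ hα
  calc cα * ε ^ (t - 1) * (d * μ) ≤ a * ε ^ t + cα * ε ^ (t - 1) * b * S ^ (1 / t) := by
        linarith
    _ ≤ a * ε ^ t + cα * ε ^ (t - 1) * b * (K₁ ^ (1 / t) * ε) := by gcongr
    _ = _ := by rw [hεt]; field_simp

theorem allAtOnce_Tikhonov_rate_apriori_general
    {X V W Y : Type*}
    [NormedAddCommGroup X] [NormedSpace ℝ X]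
    [NormedAddCommGroup V] [NormedSpace ℝ V]
    [NormedAddCommGroup W] [NormedSpace ℝ W]
    [NormedAddCommGroup Y] [NormedSpace ℝ Y]
    (A : X × V → W) (C : V → Y)
    (xdag : X) (udag : V) (A' : X × V →L[ℝ] W) (C' : V →L[ℝ] Y)
    (y : Y)
    (ρ m o t CL L cα : ℝ)
    (hρ : 0 < ρ) (hm : 1 ≤ m) (ho : 1 ≤ o)
    (ht : 1 < t) (hCL : 0 ≤ CL) (hcα : 0 < cα)
    (D : Set (X × V))
    (R₂ : X × V → ℝ)
    (ξ : (X × V) →L[ℝ] ℝ)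
    (hsub : ∀ p : X × V, R₂ (xdag, udag) + ξ (p.1 - xdag, p.2 - udag) ≤ R₂ p)
    (Dξ : X × V → ℝ)
    (hDξ : ∀ p : X × V,
      Dξ p = R₂ p - R₂ (xdag, udag) - ξ (p.1 - xdag, p.2 - udag))
    (F' : (X × V) →L[ℝ] W × Y)
    (hF' : F' = A'.prod (C'.comp (ContinuousLinearMap.snd ℝ X V)))
    (v : (W × Y) →L[ℝ] ℝ) (hsc : ξ = v.comp F') (hvsmall : L * ‖v‖ < 1)
    (hsmooth : ∀ p ∈ D, ‖A' (p.1 - xdag, p.2 - udag)‖ + ‖C' (p.2 - udag)‖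
        ≤ CL * (ρ / m * ‖A p‖ ^ m + 1 / o * ‖C p.2 - y‖ ^ o) ^ (1 / t)
          + L * Dξ p) :
    ∃ K : ℝ, ∀ δ : ℝ, 0 < δ → ∀ yδ : Y, ‖y - yδ‖ ≤ δ →
      ∀ xα : X, ∀ uα : V, (xα, uα) ∈ D →
        ρ / m * ‖A (xα, uα)‖ ^ m + 1 / o * ‖C uα - yδ‖ ^ o
            + cα * δ ^ (o * (t - 1) / t) * R₂ (xα, uα)
          ≤ δ ^ o / o + cα * δ ^ (o * (t - 1) / t) * R₂ (xdag, udag) →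
        Dξ (xα, uα) ≤ K * δ ^ (o / t) := by
  have hm₀ : 0 < m := by linarith
  have ho₀ : 0 < o := by linarith
  obtain ⟨K, hK⟩ := exists_rate_of_variational_ineq (a := 1 / o) (c := 2 ^ (o - 1))
    (μ := 1 - L * ‖v‖) (b := ‖v‖ * CL) ht (by positivity) (by positivity) hcα
    (by linarith) (by positivity)
  refine ⟨K, fun δ hδ yδ hyδ xα uα hD hmin => ?_⟩
  set ε := δ ^ (o / t)
  have hδo : δ ^ o = ε ^ t := by rw [← rpow_mul hδ.le, div_mul_cancel₀ _ (by linarith)]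
  have hδα : δ ^ (o * (t - 1) / t) = ε ^ (t - 1) := by rw [← rpow_mul hδ.le]; ring_nf
  rw [hδo, hδα] at hmin
  set S := ρ / m * ‖A (xα, uα)‖ ^ m + 1 / o * ‖C uα - y‖ ^ o
  set T := ρ / m * ‖A (xα, uα)‖ ^ m + 1 / o * ‖C uα - yδ‖ ^ o
  set Δ : X × V := (xα - xdag, uα - udag)
  have hD_nonneg : 0 ≤ Dξ (xα, uα) := by linarith [hDξ (xα, uα), hsub (xα, uα)]
  have hξ : -ξ Δ ≤ ‖v‖ * (CL * S ^ (1 / t) + L * Dξ (xα, uα)) := by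
    refine (neg_le_abs _).trans ?_
    calc |ξ Δ| = |v (A' Δ, C' Δ.2)| := by rw [hsc, hF']; rfl
      _ ≤ ‖v‖ * (‖A' Δ‖ + ‖C' Δ.2‖) := abs_apply_prod_le v _ _
      _ ≤ _ := mul_le_mul_of_nonneg_left (hsmooth _ hD) (norm_nonneg v)
  have hvar : T + cα * ε ^ (t - 1) * (1 - L * ‖v‖) * Dξ (xα, uα)
      ≤ 1 / o * ε ^ t + cα * ε ^ (t - 1) * (‖v‖ * CL) * S ^ (1 / t) := by
    have hd : Dξ (xα, uα) = R₂ (xα, uα) - R₂ (xdag, udag) - ξ Δ := hDξ _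
    have hαξ := mul_le_mul_of_nonneg_left hξ (by positivity : 0 ≤ cα * ε ^ (t - 1))
    rw [hd] at hαξ ⊢
    linear_combination hmin + hαξ
  have hmisfit : S ≤ 2 ^ (o - 1) * (T + 1 / o * ε ^ t) := by
    have hCy := norm_sub_rpow_le_of_norm_sub_le (z := C uα) ho hyδ
    rw [hδo] at hCy
    have h2 : 1 ≤ (2 : ℝ) ^ (o - 1) := one_le_rpow (by norm_num) (by linarith)
    have hP : 0 ≤ ρ / m * ‖A (xα, uα)‖ ^ m := by positivity
    linarith [mul_le_mul_of_nonneg_left hCy (one_div_nonneg.mpr ho₀.le),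
      mul_le_mul_of_nonneg_right h2 hP]
  exact hK ε T S _ (by positivity) (by positivity) (by positivity) hD_nonneg hvar hmisfit

/-- Convergence rate `D_ξ = O(δ^{o/t})` for all-at-once Tikhonov regularization
with the a priori parameter choice `α = c_α δ^{o(t−1)/t}` (Proposition 2.2):
under the local smoothness condition (Assumption 2.7) on `D` and the source
condition `ξ = v ∘ 𝐅'(x†,u†)` with `L‖v‖ < 1`, there is a constant `K`
(independent of `δ`) such that every `(xα,uα) ∈ D` satisfying the Tikhonov
minimality estimate satisfies `D_ξ(xα,uα) ≤ K δ^{o/t}`. -/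
theorem allAtOnce_Tikhonov_rate_apriori
    {X V W Y : Type*}
    [NormedAddCommGroup X] [NormedSpace ℝ X] [CompleteSpace X]
    [NormedAddCommGroup V] [NormedSpace ℝ V] [CompleteSpace V]
    [NormedAddCommGroup W] [NormedSpace ℝ W] [CompleteSpace W]
    [NormedAddCommGroup Y] [NormedSpace ℝ Y] [CompleteSpace Y]
    (A : X × V → W) (C : V → Y)
    (xdag : X) (udag : V) (A' : X × V →L[ℝ] W) (C' : V →L[ℝ] Y)
    (hA : HasFDerivAt A A' (xdag, udag)) (hC : HasFDerivAt C C' udag)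
    (hAdag : A (xdag, udag) = 0) (y : Y) (hCdag : C udag = y)
    (ρ m o r q t CL L cα : ℝ)
    (hρ : 0 < ρ) (hm : 1 ≤ m) (ho : 1 ≤ o) (hr : 1 ≤ r) (hq : 1 ≤ q)
    (ht : 1 < t) (hCL : 0 ≤ CL) (hL : 0 ≤ L) (hcα : 0 < cα)
    (x₀ : X) (u₀ : V) (D : Set (X × V))
    (R₂ : X × V → ℝ)
    (hR₂ : ∀ p : X × V, R₂ p = 1 / r * ‖p.1 - x₀‖ ^ r + 1 / q * ‖p.2 - u₀‖ ^ q)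
    (ξ : (X × V) →L[ℝ] ℝ)
    (hsub : ∀ p : X × V, R₂ (xdag, udag) + ξ (p.1 - xdag, p.2 - udag) ≤ R₂ p)
    (Dξ : X × V → ℝ)
    (hDξ : ∀ p : X × V,
      Dξ p = R₂ p - R₂ (xdag, udag) - ξ (p.1 - xdag, p.2 - udag))
    (F' : (X × V) →L[ℝ] W × Y)
    (hF' : F' = A'.prod (C'.comp (ContinuousLinearMap.snd ℝ X V)))
    (v : (W × Y) →L[ℝ] ℝ) (hsc : ξ = v.comp F') (hvsmall : L * ‖v‖ < 1)
    (hsmooth : ∀ p ∈ D, ‖A' (p.1 - xdag, p.2 - udag)‖ + ‖C' (p.2 - udag)‖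
        ≤ CL * (ρ / m * ‖A p‖ ^ m + 1 / o * ‖C p.2 - y‖ ^ o) ^ (1 / t)
          + L * Dξ p) :
    ∃ K : ℝ, ∀ δ : ℝ, 0 < δ → ∀ yδ : Y, ‖y - yδ‖ ≤ δ →
      ∀ xα : X, ∀ uα : V, (xα, uα) ∈ D →
        ρ / m * ‖A (xα, uα)‖ ^ m + 1 / o * ‖C uα - yδ‖ ^ o
            + cα * δ ^ (o * (t - 1) / t) * R₂ (xα, uα)
          ≤ δ ^ o / o + cα * δ ^ (o * (t - 1) / t) * R₂ (xdag, udag) →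
        Dξ (xα, uα) ≤ K * δ ^ (o / t) :=
  allAtOnce_Tikhonov_rate_apriori_general A C xdag udag A' C' y ρ m o t CL L cα hρ hm ho ht hCL hcα
    D R₂ ξ hsub Dξ hDξ F' hF' v hsc hvsmall hsmooth
end

section
/- Let X, V, W, Y be real Hilbert spaces, L : X → W and C : V → Y continuous linear maps, and K : V → W a continuous linear isomorphism. Set S := −(K⁻¹ ∘ L) : X → V, and T := Id_X + S* ∘ S where * denotes the Hilbert space adjoint. Let x†, x₀ ∈ X and u₀ ∈ V, and set u† := S x†. Then the following are equivalent: (1) there exist v_mod ∈ W and v_obs ∈ Y such that x† − x₀ = L* v_mod and u† − u₀ = K* v_mod + C* v_obs; (2) there exists v_obs ∈ Y such that T(x† − x₀) = −(K⁻¹ ∘ L)* ( C* v_obs + (K⁻¹ ∘ L) x₀ + u₀ ). -/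
/-!
Write `M := K⁻¹L`, so that `L = K M`, `S = -M` and `T = I + M*M`. Since `L* = M* K*` and `K*` is
invertible, the unknown `v_mod` in the all-at-once condition is determined by `K* v_mod`, which the
second equation fixes as `u† - u₀ - C* v_obs`; so (1) says exactly `x† - x₀ = M*(u† - u₀ - C* v_obs)`.
With `u† = -M x†`, moving `M* M (x† - x₀)` across turns this into (2).
-/

namespace ContinuousLinearMap

variable {𝕜 X V W : Type*} [RCLike 𝕜]
  [NormedAddCommGroup X] [InnerProductSpace 𝕜 X] [CompleteSpace X]
  [NormedAddCommGroup V] [InnerProductSpace 𝕜 V] [CompleteSpace V]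
  [NormedAddCommGroup W] [InnerProductSpace 𝕜 W] [CompleteSpace W]

theorem _root_.ContinuousLinearEquiv.adjoint_apply_adjoint_symm_apply (K : V ≃L[𝕜] W) (v : V) :
    adjoint (K : V →L[𝕜] W) (adjoint (K.symm : W →L[𝕜] V) v) = v := by
  rw [← comp_apply, ← adjoint_comp, K.coe_symm_comp_coe, adjoint_id, id_apply]

theorem exists_adjoint_comp_eq_and_adjoint_eq_iff (K : V ≃L[𝕜] W) (M : X →L[𝕜] V)
    (v : V) (x : X) :
    (∃ w : W, adjoint ((K : V →L[𝕜] W) ∘L M) w = x ∧ adjoint (K : V →L[𝕜] W) w = v) ↔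
      adjoint M v = x := by
  simp only [adjoint_comp, comp_apply]
  constructor
  · rintro ⟨w, hx, rfl⟩
    exact hx
  · intro hx
    exact ⟨adjoint (K.symm : W →L[𝕜] V) v, by rw [K.adjoint_apply_adjoint_symm_apply, hx],
      K.adjoint_apply_adjoint_symm_apply v⟩

end ContinuousLinearMap

open ContinuousLinearMap

/-- Comparison of source conditions in the linear Hilbert space setting
(Section 6.2): for the linear model `Lx + Ku = 0` with `K` an isomorphism,
parameter-to-state map `S = −K⁻¹L`, `T = I + S*S`, and exact solution
`u† = S x†`, the all-at-once benchmark source condition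
`x†−x₀ = L* v_mod`, `u†−u₀ = K* v_mod + C* v_obs` is equivalent to its
reformulation (6.4) after elimination of `v_mod`:
`T(x†−x₀) = −(K⁻¹L)*(C* v_obs + (K⁻¹L)x₀ + u₀)`. -/
theorem sourceCondition_equiv_linear_Hilbert
    {X V W Y : Type*}
    [NormedAddCommGroup X] [InnerProductSpace ℝ X] [CompleteSpace X]
    [NormedAddCommGroup V] [InnerProductSpace ℝ V] [CompleteSpace V]
    [NormedAddCommGroup W] [InnerProductSpace ℝ W] [CompleteSpace W]
    [NormedAddCommGroup Y] [InnerProductSpace ℝ Y] [CompleteSpace Y]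
    (L : X →L[ℝ] W) (C : V →L[ℝ] Y) (K : V ≃L[ℝ] W)
    (S : X →L[ℝ] V) (hS : S = -((K.symm : W →L[ℝ] V).comp L))
    (T : X →L[ℝ] X)
    (hT : T = ContinuousLinearMap.id ℝ X
        + (ContinuousLinearMap.adjoint S).comp S)
    (xdag x₀ : X) (udag u₀ : V) (hudag : udag = S xdag) :
    (∃ (vmod : W) (vobs : Y),
      xdag - x₀ = ContinuousLinearMap.adjoint L vmod ∧
      udag - u₀ = ContinuousLinearMap.adjoint (K : V →L[ℝ] W) vmod
                    + ContinuousLinearMap.adjoint C vobs) ↔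
    (∃ vobs : Y,
      T (xdag - x₀) =
        -(ContinuousLinearMap.adjoint ((K.symm : W →L[ℝ] V).comp L)
          (ContinuousLinearMap.adjoint C vobs
            + ((K.symm : W →L[ℝ] V).comp L) x₀ + u₀))) := by
  set M : X →L[ℝ] V := (K.symm : W →L[ℝ] V) ∘L L
  have hL : L = (K : V →L[ℝ] W) ∘L M := by
    ext x; simp [M]
  have hT_apply : ∀ d, T d = d + adjoint M (M d) := by
    intro d; simp [hT, hS, M]
  rw [exists_comm]
  refine exists_congr fun vobs => ?_
  calc (∃ vmod : W, xdag - x₀ = adjoint L vmod ∧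
          udag - u₀ = adjoint (K : V →L[ℝ] W) vmod + adjoint C vobs)
      ↔ ∃ vmod : W, adjoint ((K : V →L[ℝ] W) ∘L M) vmod = xdag - x₀ ∧
          adjoint (K : V →L[ℝ] W) vmod = udag - u₀ - adjoint C vobs := by
        simp only [← hL, eq_sub_iff_add_eq, eq_comm]
    _ ↔ adjoint M (udag - u₀ - adjoint C vobs) = xdag - x₀ :=
        exists_adjoint_comp_eq_and_adjoint_eq_iff K M _ _
    _ ↔ T (xdag - x₀) = -adjoint M (adjoint C vobs + M x₀ + u₀) := by
        have hsource : adjoint M (udag - u₀ - adjoint C vobs) =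
            -adjoint M (adjoint C vobs + M x₀ + u₀) - adjoint M (M (xdag - x₀)) := by
          rw [← map_neg, ← map_sub, hudag, hS, neg_apply, map_sub M]
          congr 1
          abel
        rw [hT_apply, ← eq_sub_iff_add_eq, hsource, eq_comm]
end
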